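/- arXiv:1811.10118 — 4 statements merged into one kernel-verified Lean document; each statement's English description precedes it below -/
import Mathlib

section
/- The only solutions in positive integers of the equation x^2 + 7^{2k+1} = 2^n with k ≥ 0 and n ≥ 3 are (|x|, k, n) ∈ {(1,0,3), (3,0,4), (5,0,5), (11,0,7), (13,1,9), (181,0,15)}. -/
/-!
Since `7 ^ k` is odd, descent in `ℤ[ω]`, `ω = (1 + √-7) / 2`, shows that a solution of
`x ^ 2 + 7 * (7 ^ k) ^ 2 = 2 ^ n` has `|x| = |V_m|` and `7 ^ k = |U_m|` with `m = n - 2`, where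
`ω ^ m = (V_m + U_m √-7) / 2`. So everything comes down to the indices `m` for which `|U_m|` is
a power of `7`.

For `|U_m| = 1` this is Skolem's `7`-adic argument. Put `ζ = 1 + √-7 = 2ω`. When `7 ∤ s`, the
imaginary part of `ζ ^ (3 * 7 ^ j * s)` has `7`-adic valuation exactly `j`, while its real part
and `2 ^ (3 * 7 ^ j * s)` are `≡ 1 (mod 7 ^ (j + 1))`. Expanding `ζ ^ m * ζ ^ (3 * 7 ^ j * s)`
then shows `U_(m + 3 * 7 ^ j * s) ≠ U_m` whenever `7 ∤ V_m`, so on each residue class mod `3`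
the sequence `U` takes a value at most once beyond a suitable anchor. Together with
`U_m ≡ 1 (mod 37)` forcing `3 ∤ m`, this leaves `m ∈ {1, 2, 3, 5, 13}`.

For `|U_m| = 7 ^ k` with `k ≥ 1`, `2 ^ m U_m ≡ 2 m (mod 7)` gives `7 ∣ m`, and `97 ∣ U_49`
rules out `49 ∣ m`. As `U` is a divisibility sequence, `U_(m / 7)` divides `7 ^ k` and is prime
to `7`, so `|U_(m / 7)| = 1`, and only `m = 7` survives.
-/

theorem Int.prime_seven : Prime (7 : ℤ) := Nat.prime_iff_prime_int.mp Nat.prime_seven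

namespace Zsqrtd

variable {d : ℤ}

theorem im_dvd_im_pow (w : ℤ√d) (n : ℕ) : w.im ∣ (w ^ n).im := by
  induction n with
  | zero => simp
  | succ n ih =>
    rw [pow_succ, im_mul]
    exact dvd_add (dvd_mul_left _ _) (dvd_mul_of_dvd_left ih _)

theorem re_im_pow_modEq {Q : ℤ} (w : ℤ√d) (hQ : Q ∣ d * w.im ^ 2) (s : ℕ) :
    (w ^ s).re ≡ w.re ^ s [ZMOD Q] ∧ (w ^ s).im ≡ s * w.re ^ (s - 1) * w.im [ZMOD Q] := by
  induction s with
  | zero => simp [Int.ModEq.refl]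
  | succ s ih =>
    obtain ⟨hre, him⟩ := ih
    rw [pow_succ, re_mul, im_mul]
    constructor
    · calc (w ^ s).re * w.re + d * (w ^ s).im * w.im
          ≡ w.re ^ s * w.re + d * (s * w.re ^ (s - 1) * w.im) * w.im [ZMOD Q] :=
            (hre.mul_right _).add ((him.mul_left d).mul_right _)
        _ = w.re ^ (s + 1) + s * w.re ^ (s - 1) * (d * w.im ^ 2) := by ring
        _ ≡ w.re ^ (s + 1) + s * w.re ^ (s - 1) * 0 [ZMOD Q] :=
            ((Int.modEq_zero_iff_dvd.2 hQ).mul_left _).add_left _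
        _ = w.re ^ (s + 1) := by ring
    · calc (w ^ s).re * w.im + (w ^ s).im * w.re
          ≡ w.re ^ s * w.im + s * w.re ^ (s - 1) * w.im * w.re [ZMOD Q] :=
            (hre.mul_right _).add (him.mul_right _)
        _ = (s + 1 : ℕ) * w.re ^ (s + 1 - 1) * w.im := by
          rcases s with _ | s
          · simp
          · push_cast; ring

theorem im_pow_seven (w : ℤ√(-7)) :
    (w ^ 7).im = 7 * w.im * (w.re ^ 6 - 7 * (5 * w.re ^ 4 * w.im ^ 2 - 21 * w.re ^ 2 * w.im ^ 4
      + 7 * w.im ^ 6)) := by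
  simp only [pow_succ, pow_zero, one_mul, re_mul, im_mul]
  ring

end Zsqrtd

namespace RamanujanNagell

open Zsqrtd

/-- With `lucasV`, the Lucas sequences `U_m(1, 2)`, `V_m(1, 2)`:
`((1 + √-7) / 2) ^ m = (lucasV m + lucasU m * √-7) / 2`, see `two_mul_zeta_pow`. -/
def lucasU : ℕ → ℤ
  | 0 => 0
  | 1 => 1
  | n + 2 => lucasU (n + 1) - 2 * lucasU n

def lucasV : ℕ → ℤ
  | 0 => 2
  | 1 => 1
  | n + 2 => lucasV (n + 1) - 2 * lucasV n

theorem two_mul_lucas_succ (n : ℕ) :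
    2 * lucasV (n + 1) = lucasV n - 7 * lucasU n ∧ 2 * lucasU (n + 1) = lucasV n + lucasU n := by
  induction n using Nat.twoStepInduction with
  | zero => decide
  | one => decide
  | more n h₀ h₁ =>
    simp only [lucasU, lucasV] at *
    constructor <;> linarith

theorem odd_lucasU {n : ℕ} (hn : n ≠ 0) : Odd (lucasU n) := by
  obtain ⟨n, rfl⟩ := Nat.exists_eq_succ_of_ne_zero hn
  induction n with
  | zero => decide
  | succ n ih => exact (ih n.succ_ne_zero).sub_even (even_two_mul _)

theorem four_dvd_lucasV_sub_lucasU (n : ℕ) : 4 ∣ lucasV (n + 1) - lucasU (n + 1) :=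
  ⟨-lucasU n, by linarith [two_mul_lucas_succ n]⟩

def zeta : ℤ√(-7) := ⟨1, 1⟩

theorem two_mul_zeta_pow (n : ℕ) :
    2 * (zeta ^ n).re = 2 ^ n * lucasV n ∧ 2 * (zeta ^ n).im = 2 ^ n * lucasU n := by
  induction n with
  | zero => decide
  | succ n ih =>
    obtain ⟨hV, hU⟩ := two_mul_lucas_succ n
    simp only [pow_succ, re_mul, im_mul, show zeta.re = 1 from rfl, show zeta.im = 1 from rfl]
    constructor
    · linear_combination ih.1 - 7 * ih.2 - 2 ^ n * hV
    · linear_combination ih.1 + ih.2 - 2 ^ n * hU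

theorem re_sq_add_seven_mul_im_sq_zeta_pow (n : ℕ) :
    (zeta ^ n).re ^ 2 + 7 * (zeta ^ n).im ^ 2 = 8 ^ n := by
  have h : (zeta ^ n).norm = 8 ^ n := map_pow normMonoidHom zeta n
  rw [norm_def] at h
  linear_combination h

theorem zeta_pow_modEq_seven (n : ℕ) :
    (zeta ^ n).re ≡ 1 [ZMOD 7] ∧ (zeta ^ n).im ≡ n [ZMOD 7] := by
  simpa [zeta] using zeta.re_im_pow_modEq (Q := 7) (by simp [zeta]) n

theorem not_seven_dvd_re_zeta_pow (n : ℕ) : ¬ 7 ∣ (zeta ^ n).re := by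
  have h := (zeta_pow_modEq_seven n).1
  unfold Int.ModEq at h
  omega

theorem two_pow_mul_lucasU_add (m n : ℕ) :
    2 ^ n * lucasU (m + n) = lucasV m * (zeta ^ n).im + lucasU m * (zeta ^ n).re := by
  have h := congrArg Zsqrtd.im (pow_add zeta m n)
  rw [im_mul] at h
  obtain ⟨hV, hU⟩ := two_mul_zeta_pow m
  apply mul_left_cancel₀ (pow_ne_zero m (two_ne_zero' ℤ))
  linear_combination
    -(two_mul_zeta_pow (m + n)).2 + 2 * h + (zeta ^ n).im * hV + (zeta ^ n).re * hU

theorem eight_pow_modEq_one {j n : ℕ} (hn : 7 ^ j ∣ n) :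
    (8 : ℤ) ^ n ≡ 1 [ZMOD 7 ^ (j + 1)] := by
  obtain ⟨c, rfl⟩ := hn
  have h : ((7 : ℕ) : ℤ) ^ (j + 1) ∣ 8 ^ 7 ^ j - 1 ^ 7 ^ j :=
    dvd_sub_pow_of_dvd_sub (by norm_num) j
  rw [pow_mul]
  simpa using (Int.modEq_iff_dvd.2 h).symm.pow c

/-- The norm `X² + 7Y² = 8ⁿ` controls the real part once the imaginary part is `7`-adically
small. -/
theorem re_zeta_pow_modEq_one {j n : ℕ} (hn : 7 ^ j ∣ n) (him : 7 ^ j ∣ (zeta ^ n).im) :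
    (zeta ^ n).re ≡ 1 [ZMOD 7 ^ (j + 1)] := by
  obtain ⟨y, hy⟩ := him
  have hsq : (zeta ^ n).re ^ 2 ≡ 1 [ZMOD 7 ^ (j + 1)] := calc
    (zeta ^ n).re ^ 2 ≡ (zeta ^ n).re ^ 2 + 7 * (zeta ^ n).im ^ 2 [ZMOD 7 ^ (j + 1)] :=
      Int.modEq_iff_dvd.2 ⟨7 ^ j * y ^ 2, by rw [hy]; ring⟩
    _ = 8 ^ n := re_sq_add_seven_mul_im_sq_zeta_pow n
    _ ≡ 1 [ZMOD 7 ^ (j + 1)] := eight_pow_modEq_one hn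
  have hdvd := hsq.dvd
  rw [show 1 - (zeta ^ n).re ^ 2 = -(((zeta ^ n).re + 1) * ((zeta ^ n).re - 1)) by ring,
    dvd_neg] at hdvd
  have hX : ¬ (7 : ℤ) ∣ (zeta ^ n).re + 1 := by
    have h := (zeta_pow_modEq_seven n).1
    unfold Int.ModEq at h
    omega
  have hcop := ((Prime.coprime_iff_not_dvd Int.prime_seven).2 hX).pow_left (m := j + 1)
  exact (Int.modEq_iff_dvd.2 (hcop.dvd_of_dvd_mul_left hdvd)).symm

theorem exists_im_zeta_pow_three_mul_seven_pow (j : ℕ) :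
    ∃ y, (zeta ^ (3 * 7 ^ j)).im = 7 ^ j * y ∧ ¬ 7 ∣ y := by
  induction j with
  | zero => exact ⟨-4, by decide, by decide⟩
  | succ j ih =>
    obtain ⟨y, hy, h7y⟩ := ih
    have hX := not_seven_dvd_re_zeta_pow (3 * 7 ^ j)
    rw [show 3 * 7 ^ (j + 1) = 3 * 7 ^ j * 7 by ring, pow_mul]
    generalize zeta ^ (3 * 7 ^ j) = w at hy hX ⊢
    refine ⟨y * (w.re ^ 6 - 7 * (5 * w.re ^ 4 * w.im ^ 2 - 21 * w.re ^ 2 * w.im ^ 4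
      + 7 * w.im ^ 6)), by rw [im_pow_seven, hy]; ring, fun h ↦ ?_⟩
    have h7 := Int.prime_seven
    refine (h7.dvd_mul.1 h).elim h7y fun h ↦ hX (h7.dvd_of_dvd_pow (n := 6) ?_)
    exact (dvd_sub_left (dvd_mul_right _ _)).1 h

theorem seven_pow_exactly_dvd_im_zeta_pow {j s : ℕ} (hs : ¬ 7 ∣ s) :
    7 ^ j ∣ (zeta ^ (3 * 7 ^ j * s)).im ∧ ¬ 7 ^ (j + 1) ∣ (zeta ^ (3 * 7 ^ j * s)).im := by
  obtain ⟨y, hY, hy⟩ := exists_im_zeta_pow_three_mul_seven_pow j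
  set w := zeta ^ (3 * 7 ^ j)
  have hQ : (7 : ℤ) ^ (j + 1) ∣ -7 * w.im ^ 2 := ⟨-(7 ^ j * y ^ 2), by rw [hY]; ring⟩
  have hI := (w.re_im_pow_modEq hQ s).2.dvd
  rw [← pow_mul, hY] at hI
  have hmain : (7 : ℤ) ^ j ∣ s * w.re ^ (s - 1) * (7 ^ j * y) :=
    ⟨s * w.re ^ (s - 1) * y, by ring⟩
  constructor
  · simpa using dvd_sub hmain ((pow_dvd_pow 7 j.le_succ).trans hI)
  · intro hI'
    have h7 := Int.prime_seven
    have hdvd : (7 : ℤ) ^ j * 7 ∣ 7 ^ j * (s * w.re ^ (s - 1) * y) := by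
      rw [← pow_succ, show (7 : ℤ) ^ j * (s * w.re ^ (s - 1) * y)
        = s * w.re ^ (s - 1) * (7 ^ j * y) - (zeta ^ (3 * 7 ^ j * s)).im
          + (zeta ^ (3 * 7 ^ j * s)).im by ring]
      exact dvd_add hI hI'
    rcases h7.dvd_mul.1 ((mul_dvd_mul_iff_left (by positivity)).1 hdvd) with h | h
    · rcases h7.dvd_mul.1 h with h | h
      · exact hs (by exact_mod_cast h)
      · exact not_seven_dvd_re_zeta_pow _ (h7.dvd_of_dvd_pow h)
    · exact hy h

theorem lucasU_add_three_mul_seven_pow_mul_ne {m j s : ℕ} (hV : ¬ 7 ∣ lucasV m)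
    (hs : ¬ 7 ∣ s) : lucasU (m + 3 * 7 ^ j * s) ≠ lucasU m := by
  intro hU
  set n := 3 * 7 ^ j * s
  obtain ⟨hIj, hIj1⟩ := seven_pow_exactly_dvd_im_zeta_pow (j := j) hs
  have hR := re_zeta_pow_modEq_one ⟨3 * s, by ring⟩ hIj
  have h2 : (2 : ℤ) ^ n ≡ 1 [ZMOD 7 ^ (j + 1)] := by
    rw [show n = 3 * (7 ^ j * s) by ring, pow_mul]
    exact eight_pow_modEq_one (dvd_mul_right _ _)
  have hVI : lucasV m * (zeta ^ n).im = lucasU m * (2 ^ n - (zeta ^ n).re) := by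
    linear_combination (two_pow_mul_lucasU_add m n).symm + 2 ^ n * hU
  have hcop := ((Prime.coprime_iff_not_dvd Int.prime_seven).2 hV).pow_left (m := j + 1)
  refine hIj1 (hcop.dvd_of_dvd_mul_left ?_)
  rw [hVI]
  exact dvd_mul_of_dvd_right (hR.trans h2.symm).dvd _

theorem lucasU_ne_of_lt_of_modEq {m n : ℕ} (hV : ¬ 7 ∣ lucasV m) (hlt : m < n)
    (hmod : n ≡ m [MOD 3]) : lucasU n ≠ lucasU m := by
  obtain ⟨t, rfl⟩ : ∃ t, n = m + 3 * t := by
    obtain ⟨t, ht⟩ := (Nat.modEq_iff_dvd' hlt.le).1 hmod.symm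
    exact ⟨t, by omega⟩
  obtain ⟨j, s, hs, rfl⟩ :=
    Nat.exists_eq_pow_mul_and_not_dvd (by omega : t ≠ 0) 7 (by norm_num)
  rw [← mul_assoc]
  exact lucasU_add_three_mul_seven_pow_mul_ne hV hs

theorem seven_dvd_lucasU_iff {n : ℕ} : 7 ∣ lucasU n ↔ 7 ∣ n := by
  have h7 := Int.prime_seven
  have h72 : ¬ (7 : ℤ) ∣ 2 := by norm_num
  have h : (7 : ℤ) ∣ 2 ^ n * lucasU n - 2 * n := by
    rw [← (two_mul_zeta_pow n).2]
    exact ((zeta_pow_modEq_seven n).2.mul_left 2).symm.dvd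
  constructor
  · intro hU
    have h2n := (dvd_sub_right (dvd_mul_of_dvd_right hU _)).1 h
    exact Int.natCast_dvd_natCast.1 ((h7.dvd_mul.1 h2n).resolve_left h72)
  · intro hn
    have h2n : (7 : ℤ) ∣ 2 * n := dvd_mul_of_dvd_right (Int.natCast_dvd_natCast.2 hn) _
    exact (h7.dvd_mul.1 ((dvd_sub_left h2n).1 h)).resolve_left
      fun h ↦ h72 (h7.dvd_of_dvd_pow h)

theorem lucasU_dvd_lucasU {c n : ℕ} (h : c ∣ n) : lucasU c ∣ lucasU n := by
  rcases eq_or_ne c 0 with rfl | hc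
  · rw [zero_dvd_iff.1 h]
  obtain ⟨e, rfl⟩ := h
  have h2 : 2 ^ c * lucasU c ∣ 2 ^ (c * e) * lucasU (c * e) := by
    rw [← (two_mul_zeta_pow c).2, ← (two_mul_zeta_pow (c * e)).2, pow_mul]
    exact mul_dvd_mul_left 2 (im_dvd_im_pow _ e)
  exact (Int.isCoprime_two_right.2 (odd_lucasU hc)).pow_right.dvd_of_dvd_mul_left
    (dvd_of_mul_left_dvd h2)

theorem lucasU_cast_periodic {q P : ℕ} (h₀ : (lucasU P : ZMod q) = 0)
    (h₁ : (lucasU (P + 1) : ZMod q) = 1) :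
    Function.Periodic (fun m ↦ (lucasU m : ZMod q)) P := by
  intro m
  induction m using Nat.twoStepInduction with
  | zero => simpa [lucasU] using h₀
  | one => simpa [add_comm, lucasU] using h₁
  | more n ih₀ ih₁ =>
    simp only at ih₀ ih₁ ⊢
    rw [show n + 2 + P = n + P + 2 by ring, lucasU, lucasU]
    push_cast
    rw [show n + P + 1 = n + 1 + P by ring, ih₁, ih₀]

theorem not_three_dvd_of_lucasU_eq_one {m : ℕ} (h : lucasU m = 1) : ¬ 3 ∣ m := by
  have hper := (lucasU_cast_periodic (q := 37) (P := 36) (by decide) (by decide)).map_mod_nat m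
  have key : ∀ r < 36, (lucasU r : ZMod 37) = 1 → ¬ 3 ∣ r := by decide
  have := key (m % 36) (Nat.mod_lt _ (by norm_num)) (by rw [hper, h]; rfl)
  omega

theorem natAbs_lucasU_eq_one {m : ℕ} (h : (lucasU m).natAbs = 1) :
    m = 1 ∨ m = 2 ∨ m = 3 ∨ m = 5 ∨ m = 13 := by
  rcases lt_or_ge m 14 with hm | hm
  · interval_cases m <;> revert h <;> decide
  exfalso
  have hne {m₀ : ℕ} (hV : ¬ 7 ∣ lucasV m₀) (hm₀ : m₀ < 14) (hmod : m % 3 = m₀ % 3) :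
      lucasU m ≠ lucasU m₀ :=
    lucasU_ne_of_lt_of_modEq hV (by omega) hmod
  rcases Int.natAbs_eq_iff.1 h with h1 | h1 <;> push_cast at h1
  · have h3 := not_three_dvd_of_lucasU_eq_one h1
    rcases (by omega : m % 3 = 1 ∨ m % 3 = 2) with hr | hr
    · exact hne (m₀ := 1) (by decide) (by norm_num) hr (h1.trans (by decide))
    · exact hne (m₀ := 2) (by decide) (by norm_num) hr (h1.trans (by decide))
  · rcases (by omega : m % 3 = 0 ∨ m % 3 = 1 ∨ m % 3 = 2) with hr | hr | hr
    · exact hne (m₀ := 3) (by decide) (by norm_num) hr (h1.trans (by decide))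
    · exact hne (m₀ := 13) (by decide) (by norm_num) hr (h1.trans (by decide))
    · exact hne (m₀ := 5) (by decide) (by norm_num) hr (h1.trans (by decide))

theorem natAbs_lucasU_eq_seven_pow {m k : ℕ} (hk : k ≠ 0) (h : (lucasU m).natAbs = 7 ^ k) :
    m = 7 ∧ k = 1 := by
  obtain ⟨c, rfl⟩ := seven_dvd_lucasU_iff.1 (Int.natCast_dvd.2 (h ▸ dvd_pow_self 7 hk))
  have hc : ¬ 7 ∣ c := by
    rintro ⟨e, rfl⟩
    have h97 : (97 : ℤ) ∣ lucasU (7 * (7 * e)) :=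
      (by decide +kernel : (97 : ℤ) ∣ lucasU 49).trans (lucasU_dvd_lucasU ⟨e, by ring⟩)
    have := (Nat.prime_iff.1 (by norm_num : Nat.Prime 97)).dvd_of_dvd_pow
      (h ▸ Int.natCast_dvd.1 h97)
    norm_num at this
  have hUc : (lucasU c).natAbs = 1 := by
    refine Nat.Coprime.eq_one_of_dvd (Nat.Coprime.pow_right k ?_)
      (h ▸ Int.natAbs_dvd_natAbs.2 (lucasU_dvd_lucasU (dvd_mul_left c 7)))
    refine ((Nat.Prime.coprime_iff_not_dvd (by norm_num)).2 ?_).symm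
    rw [← Int.natCast_dvd, Nat.cast_ofNat, seven_dvd_lucasU_iff]
    exact hc
  have hc' := natAbs_lucasU_eq_one hUc
  have hk1 : k = 1 := by
    by_contra hk1
    have h49 : 7 ^ 2 ∣ (lucasU (7 * c)).natAbs := h ▸ pow_dvd_pow 7 (by omega)
    rcases hc' with rfl | rfl | rfl | rfl | rfl <;> revert h49 <;> decide +kernel
  subst hk1
  refine ⟨?_, rfl⟩
  rcases hc' with rfl | rfl | rfl | rfl | rfl <;> revert h <;> decide +kernel

theorem natAbs_eq_lucas_add_two {n : ℕ} {y t : ℤ} (hy : Odd y)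
    (hx : (2 * y + t).natAbs = (lucasV (n + 1)).natAbs)
    (ht : t.natAbs = (lucasU (n + 1)).natAbs) :
    (y + 4 * t).natAbs = (lucasV (n + 2)).natAbs ∧ y.natAbs = (lucasU (n + 2)).natAbs := by
  obtain ⟨hV, hU⟩ := two_mul_lucas_succ (n + 1)
  obtain ⟨c, hc⟩ := four_dvd_lucasV_sub_lucasU n
  simp only [Int.natAbs_eq_natAbs_iff] at hx ht ⊢
  rcases hx with hx | hx <;> rcases ht with ht | ht
  · exact absurd hy (Int.not_odd_iff_even.2 ⟨c, by linarith⟩)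
  · exact ⟨.inl (by linarith), .inl (by linarith)⟩
  · exact ⟨.inr (by linarith), .inr (by linarith)⟩
  · exact absurd hy (Int.not_odd_iff_even.2 ⟨-c, by linarith⟩)

theorem natAbs_eq_lucas_of_sq_add_seven_mul_sq (n : ℕ) {x y : ℤ} (hy : Odd y)
    (h : x ^ 2 + 7 * y ^ 2 = 2 ^ (n + 3)) :
    x.natAbs = (lucasV (n + 1)).natAbs ∧ y.natAbs = (lucasU (n + 1)).natAbs := by
  induction n generalizing x y with
  | zero =>
    obtain ⟨b, rfl⟩ := hy
    norm_num at h
    have hb : b ^ 2 + b ≤ 0 := by nlinarith [sq_nonneg x]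
    have hb : b = 0 ∨ b = -1 := by
      have : -1 ≤ b := by nlinarith
      have : b ≤ 0 := by nlinarith
      omega
    have hx : x ^ 2 = 1 := by rcases hb with rfl | rfl <;> linarith
    rcases sq_eq_one_iff.1 hx with rfl | rfl <;> rcases hb with rfl | rfl <;> decide
  | succ n ih =>
    have hx : Odd x := by
      have h' : x ^ 2 = 2 * 2 ^ (n + 3) - 7 * y ^ 2 := by linear_combination h
      refine (Int.odd_pow' two_ne_zero).1 ?_
      rw [h']
      exact (even_two_mul _).sub_odd ((by decide : Odd (7 : ℤ)).mul hy.pow)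
    wlog h4 : 4 ∣ x - y generalizing y
    · have h4' : 4 ∣ x - -y := by
        obtain ⟨a, rfl⟩ := hx
        obtain ⟨b, rfl⟩ := hy
        omega
      simpa using this hy.neg (by rw [← h]; ring) h4'
    obtain ⟨t, rfl⟩ : ∃ t, x = y + 4 * t := ⟨(x - y) / 4, by omega⟩
    have h2 : y ^ 2 + t * y + 2 * t ^ 2 = 2 * 2 ^ n :=
      mul_left_cancel₀ (by norm_num : (8 : ℤ) ≠ 0) (by linear_combination h)
    have ht : Odd t := by
      by_contra hte
      rw [Int.not_odd_iff_even] at hte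
      have : Odd (y ^ 2 + t * y + 2 * t ^ 2) :=
        (hy.pow.add_even (hte.mul_right y)).add_even (even_two_mul _)
      rw [h2] at this
      exact Int.not_even_iff_odd.2 this (even_two_mul _)
    obtain ⟨hV, hU⟩ := ih (x := 2 * y + t) ht (by linear_combination 4 * h2)
    exact natAbs_eq_lucas_add_two hy hV hU

end RamanujanNagell

open RamanujanNagell

/-- The only solutions in positive integers of `x^2 + 7^(2k+1) = 2^n` with `k ≥ 0`,
`n ≥ 3` are `(|x|, k, n) ∈ {(1,0,3), (3,0,4), (5,0,5), (11,0,7), (13,1,9), (181,0,15)}`. -/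
theorem stmt_0 (x : ℤ) (k n : ℕ) (hn : 3 ≤ n) :
    x ^ 2 + 7 ^ (2 * k + 1) = 2 ^ n ↔
      (x.natAbs, k, n) = (1, 0, 3) ∨ (x.natAbs, k, n) = (3, 0, 4) ∨
      (x.natAbs, k, n) = (5, 0, 5) ∨ (x.natAbs, k, n) = (11, 0, 7) ∨
      (x.natAbs, k, n) = (13, 1, 9) ∨ (x.natAbs, k, n) = (181, 0, 15) := by
  refine ⟨fun h ↦ ?_, fun h ↦ ?_⟩
  · obtain ⟨p, rfl⟩ : ∃ p, n = p + 3 := ⟨n - 3, by omega⟩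
    obtain ⟨hx, hU⟩ := natAbs_eq_lucas_of_sq_add_seven_mul_sq p (y := 7 ^ k)
      (Odd.pow (by decide)) (by linear_combination h)
    rw [Int.natAbs_pow] at hU
    rcases eq_or_ne k 0 with rfl | hk
    · rcases natAbs_lucasU_eq_one hU.symm with hp | hp | hp | hp | hp <;>
        obtain rfl := Nat.succ_injective hp <;> rw [hx] <;> decide
    · obtain ⟨hp, rfl⟩ := natAbs_lucasU_eq_seven_pow hk hU.symm
      obtain rfl := Nat.succ_injective hp
      rw [hx]
      decide
  · rcases h with h | h | h | h | h | h <;> simp only [Prod.mk.injEq] at h <;>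
      obtain ⟨hx, rfl, rfl⟩ := h <;> rcases Int.natAbs_eq_iff.1 hx with rfl | rfl <;> norm_num
end

section
/- The only pair of coprime integers (x, y) with x ≠ 0 and nonnegative integer k satisfying x^2 + 7^{2k+1} = y^4 is (|x|, |y|, k) = (3, 2, 0). -/
/-!
The factors of `(y² - x)(y² + x) = 7^(2k+1)` are coprime, hence equal to `1` and `7^(2k+1)`, so
`2y² = 1 + 7^(2k+1)`. As `8 ∣ 1 + 7^(2k+1)`, `y = 2z` is even and `(z, 7^k)` solves the Pell
equation `8u² = 7v² + 1`. By descent every solution is obtained from `(1, 1)` by iterating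
`pellStep`, and along this orbit `7 ∣ v` forces `41 ∣ v` (a computation modulo `287 = 7 · 41`).
Hence `7^k` is not divisible by `7`, i.e. `k = 0`.
-/

theorem IsCoprime.sub_add_of_isCoprime_two {R : Type*} [CommRing R] {x z : R}
    (hxz : IsCoprime x z) (h2 : IsCoprime (z - x) 2) : IsCoprime (z - x) (z + x) := by
  have hz : IsCoprime (z - x) z := by
    simpa [sub_eq_neg_add] using hxz.neg_left.add_mul_right_left 1
  rw [← IsCoprime.add_mul_left_right_iff (z := 1)]
  convert h2.mul_right hz using 2
  ring

theorem isUnit_or_isUnit_of_mul_eq_prime_pow {R : Type*} [CommRing R] [IsDomain R] [IsBezout R]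
    {a b p : R} {n : ℕ} (hp : Prime p) (hab : IsCoprime a b) (h : a * b = p ^ n) :
    IsUnit a ∨ IsUnit b := by
  by_cases hpa : p ∣ a
  · have hpb : ¬ p ∣ b := fun hpb => hp.not_isUnit (hab.isUnit_of_dvd' hpa hpb)
    exact .inr (((hp.coprime_iff_not_dvd.2 hpb).pow_left (m := n)).symm.isUnit_of_dvd' dvd_rfl
      (h ▸ dvd_mul_left b a))
  · exact .inl (((hp.coprime_iff_not_dvd.2 hpa).pow_left (m := n)).symm.isUnit_of_dvd' dvd_rfl
      (h ▸ dvd_mul_right a b))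

/-- Multiplication of `u √8 + v √7` by the unit `15 + 4 √14`. -/
def pellStep {R : Type*} [Semiring R] (p : R × R) : R × R :=
  (15 * p.1 + 14 * p.2, 16 * p.1 + 15 * p.2)

theorem pellStep_semiconj {R S : Type*} [Semiring R] [Semiring S] (f : R →+* S) :
    Function.Semiconj (Prod.map f f) pellStep pellStep := fun p => by
  simp [pellStep, map_ofNat]

theorem pell_pellStep_iff (p : ℕ × ℕ) :
    8 * (pellStep p).1 ^ 2 = 7 * (pellStep p).2 ^ 2 + 1 ↔ 8 * p.1 ^ 2 = 7 * p.2 ^ 2 + 1 := by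
  simp only [pellStep]
  constructor <;> intro h <;> linarith

theorem exists_iterate_pellStep_eq {u v : ℕ} (h : 8 * u ^ 2 = 7 * v ^ 2 + 1) :
    ∃ n, pellStep^[n] (1, 1) = (u, v) := by
  induction v using Nat.strong_induction_on generalizing u with
  | _ v ih =>
  by_cases hv : 15 * v ≤ 16 * u
  · have hv5 : v ≤ 5 := by nlinarith
    have hu : u ≤ v := by nlinarith
    refine ⟨0, ?_⟩
    interval_cases v <;> interval_cases u <;> simp_all
  · have h14 : 14 * v ≤ 15 * u := by nlinarith
    have h16 : 14 * v < 16 * u := by nlinarith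
    have hstep : pellStep (15 * u - 14 * v, 15 * v - 16 * u) = (u, v) := by
      simp only [pellStep, Prod.mk.injEq]
      omega
    obtain ⟨n, hn⟩ := ih (15 * v - 16 * u) (by omega)
      ((pell_pellStep_iff (15 * u - 14 * v, 15 * v - 16 * u)).1 (by rwa [hstep]))
    exact ⟨n + 1, by rw [Function.iterate_succ_apply', hn, hstep]⟩

/-- The orbit of `(1, 1)` under `pellStep` modulo `287 = 7 · 41`. -/
def pellResidues : Finset (ZMod 287 × ZMod 287) :=
  {(1, 1), (29, 31), (8, 68), (211, 0), (8, 219), (29, 256), (1, 286)}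

theorem pellStep_mem_pellResidues : ∀ p ∈ pellResidues, pellStep p ∈ pellResidues := by
  simp only [pellResidues, Finset.mem_insert, Finset.mem_singleton]
  rintro p (rfl | rfl | rfl | rfl | rfl | rfl | rfl) <;> simp only [pellStep, Prod.mk.injEq] <;>
    decide

theorem iterate_pellStep_mem_pellResidues (n : ℕ) : pellStep^[n] (1, 1) ∈ pellResidues := by
  induction n with
  | zero => decide
  | succ n ih =>
    rw [Function.iterate_succ_apply']
    exact pellStep_mem_pellResidues _ ih

theorem snd_eq_zero_of_mem_pellResidues : ∀ p ∈ pellResidues, 41 * p.2 = 0 → p.2 = 0 := by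
  simp only [pellResidues, Finset.mem_insert, Finset.mem_singleton]
  rintro p (rfl | rfl | rfl | rfl | rfl | rfl | rfl) <;> decide

theorem eq_zero_of_pell_pow_seven {u k : ℕ} (h : 8 * u ^ 2 = 7 * (7 ^ k) ^ 2 + 1) : k = 0 := by
  obtain ⟨n, hn⟩ := exists_iterate_pellStep_eq h
  have hmem : ((u : ZMod 287), ((7 ^ k : ℕ) : ZMod 287)) ∈ pellResidues := by
    have := (pellStep_semiconj (Nat.castRingHom (ZMod 287))).iterate_right n (1, 1)
    rw [hn, Prod.map_apply, Prod.map_apply, map_one] at this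
    exact this ▸ iterate_pellStep_mem_pellResidues n
  by_contra hk
  have h41 : 41 * ((7 ^ k : ℕ) : ZMod 287) = 0 := by
    obtain ⟨j, rfl⟩ := Nat.exists_eq_add_one_of_ne_zero hk
    exact_mod_cast (ZMod.natCast_eq_zero_iff _ 287).2 ⟨7 ^ j, by ring⟩
  have h287 := (ZMod.natCast_eq_zero_iff _ _).1 (snd_eq_zero_of_mem_pellResidues _ hmem h41)
  have : 41 ∣ 7 := (by norm_num : Nat.Prime 41).dvd_of_dvd_pow
    ((by norm_num : 41 ∣ 287).trans h287)
  omega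

theorem stmt_4_general (x y : ℤ) (k : ℕ) (hcop : IsCoprime x y)
    (heq : x ^ 2 + 7 ^ (2 * k + 1) = y ^ 4) :
    x.natAbs = 3 ∧ y.natAbs = 2 ∧ k = 0 := by
  have hfac : (y ^ 2 - x) * (y ^ 2 + x) = 7 ^ (2 * k + 1) := by linear_combination -heq
  have hodd : IsCoprime (y ^ 2 - x) 2 := IsCoprime.of_mul_left_left
    (hfac ▸ (show IsCoprime (7 : ℤ) 2 from ⟨1, -3, by norm_num⟩).pow_left)
  have hunit := isUnit_or_isUnit_of_mul_eq_prime_pow (by norm_num)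
    (hcop.pow_right.sub_add_of_isCoprime_two hodd) hfac
  have hy : 2 * y ^ 2 = 1 + 7 ^ (2 * k + 1) := by
    have : (0 : ℤ) < 7 ^ (2 * k + 1) := by positivity
    -- the factors sum to `2y² ≥ 0`, which rules out the units `-1`
    rcases hunit with h | h <;> rcases Int.isUnit_iff.1 h with h | h <;> rw [h] at hfac <;>
      nlinarith [sq_nonneg y]
  obtain ⟨z, rfl⟩ : 2 ∣ y := by
    have h8 : (1 + 7 : ℤ) ∣ 1 ^ (2 * k + 1) + 7 ^ (2 * k + 1) :=
      (odd_two_mul_add_one k).add_dvd_pow_add_pow 1 7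
    rw [one_pow, ← hy] at h8
    exact Int.prime_two.dvd_of_dvd_pow (n := 2) (by omega)
  have hk : k = 0 := eq_zero_of_pell_pow_seven (u := z.natAbs) (by
    zify
    rw [sq_abs]
    linear_combination hy)
  subst hk
  have hz : z ^ 2 = 1 := by
    ring_nf at hy
    linarith
  refine ⟨(Int.natAbs_eq_iff_sq_eq (b := 3)).2 ?_, (Int.natAbs_eq_iff_sq_eq (b := 2)).2 ?_, rfl⟩
  · linear_combination heq + 16 * (z ^ 2 + 1) * hz
  · linear_combination 4 * hz

/-- The only pair of coprime integers `(x, y)` with `x ≠ 0` and `k ≥ 0` satisfying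
`x^2 + 7^(2k+1) = y^4` is `(|x|, |y|, k) = (3, 2, 0)`. -/
theorem stmt_4 (x y : ℤ) (k : ℕ) (hcop : IsCoprime x y) (hx : x ≠ 0)
    (heq : x ^ 2 + 7 ^ (2 * k + 1) = y ^ 4) :
    x.natAbs = 3 ∧ y.natAbs = 2 ∧ k = 0 :=
  stmt_4_general x y k hcop heq
end

section
/- If (a,b) is a primitive solution of x^2 + 7^{2k+1} = y^4 (i.e., a^2 + 7^{2k+1} = b^4 with gcd(a,b)=1, a ≠ 0), then 2b^2 = 7^{2k+1} + 1. -/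
/-!
Write `a ^ 2 + p ^ n = b ^ 4` as `(b ^ 2 - a) * (b ^ 2 + a) = p ^ n`. Both factors are positive, and
an odd prime dividing both would divide `2 * a` and `2 * b ^ 2`, hence `a` and `b`. So one factor is a
positive divisor of `p ^ n` prime to `p`, i.e. `1`, the other is `p ^ n`, and their sum is `2 * b ^ 2`.
-/

namespace Int

theorem eq_one_of_mul_eq_prime_pow {p u v : ℤ} {n : ℕ} (hp : Prime p) (h : u * v = p ^ n)
    (hu : 0 < u) (hpu : ¬ p ∣ u) : u = 1 := by
  have hcop : IsCoprime u (p ^ n) := ((hp.coprime_iff_not_dvd.mpr hpu).symm).pow_right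
  have := hcop.isUnit_of_dvd' dvd_rfl ⟨v, h.symm⟩
  rw [Int.isUnit_iff] at this
  omega

theorem not_dvd_sub_and_dvd_add {p a c : ℤ} (hp : Prime p) (hp2 : ¬ p ∣ 2)
    (hac : IsCoprime a c) : ¬ (p ∣ c - a ∧ p ∣ c + a) := by
  rintro ⟨hsub, hadd⟩
  have h2a : p ∣ 2 * a := by simpa [two_mul] using dvd_sub hadd hsub
  have h2c : p ∣ 2 * c := by simpa [two_mul] using dvd_add hsub hadd
  have hpa : p ∣ a := (hp.dvd_mul.mp h2a).resolve_left hp2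
  have hpc : p ∣ c := (hp.dvd_mul.mp h2c).resolve_left hp2
  exact hp.not_isUnit (hac.isUnit_of_dvd' hpa hpc)

theorem two_mul_sq_eq_pow_add_one_of_sq_add_pow_eq_pow_four {p a b : ℤ} {n : ℕ} (hp : Prime p)
    (hp0 : 0 < p) (hp2 : ¬ p ∣ 2) (hab : IsCoprime a b) (h : a ^ 2 + p ^ n = b ^ 4) :
    2 * b ^ 2 = p ^ n + 1 := by
  set u := b ^ 2 - a
  set v := b ^ 2 + a
  have huv : u * v = p ^ n := by linear_combination -h
  have hsum : u + v = 2 * b ^ 2 := by ring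
  have hu : 0 < u ∧ 0 < v := by
    rcases pos_and_pos_or_neg_and_neg_of_mul_pos (huv ▸ pow_pos hp0 n) with hpos | ⟨hu_neg, hv_neg⟩
    · exact hpos
    · nlinarith [sq_nonneg b]
  have hnot := not_dvd_sub_and_dvd_add hp hp2 (hab.pow_right (n := 2))
  obtain hu1 | hv1 : u = 1 ∨ v = 1 := by
    by_cases hpu : p ∣ u
    · exact .inr (eq_one_of_mul_eq_prime_pow hp (by rw [mul_comm, huv]) hu.2 (hnot ⟨hpu, ·⟩))
    · exact .inl (eq_one_of_mul_eq_prime_pow hp huv hu.1 hpu)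
  · rw [hu1, one_mul] at huv
    linarith
  · rw [hv1, mul_one] at huv
    linarith

end Int

theorem stmt_5_general (a b : ℤ) (k : ℕ) (hcop : IsCoprime a b)
    (heq : a ^ 2 + 7 ^ (2 * k + 1) = b ^ 4) :
    2 * b ^ 2 = 7 ^ (2 * k + 1) + 1 :=
  Int.two_mul_sq_eq_pow_add_one_of_sq_add_pow_eq_pow_four (by norm_num) (by norm_num)
    (by norm_num) hcop heq

/-- If `(a,b)` is a primitive solution of `x^2 + 7^(2k+1) = y^4`, then `2b^2 = 7^(2k+1) + 1`. -/
theorem stmt_5 (a b : ℤ) (k : ℕ) (hcop : IsCoprime a b) (ha : a ≠ 0)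
    (heq : a ^ 2 + 7 ^ (2 * k + 1) = b ^ 4) :
    2 * b ^ 2 = 7 ^ (2 * k + 1) + 1 :=
  stmt_5_general a b k hcop heq
end

section
/- If (a, b) is a nontrivial primitive solution of x^2 + 7^{2k+1} = y^n with n an odd prime, y = b even, b not a power of 2, and n ≥ 11, and if the mod-n Galois representation of the Frey curve E₁: Y^2 + XY = X^3 + ((a-1)/4)X^2 + (b^n/64)X (with a ≡ 1 mod 4) arises from the unique rational newform of level 14, then 3 does not divide a. -/
/-!
If `3 ∣ a`, then `c = (a-1)/4 ≡ 2` and `d = bⁿ/64 ≡ a² + 7^(2k+1) ≡ 1 (mod 3)`, so `E₁`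
reduces mod `3` to `Y² + XY = X³ + 2X² + X`, which has exactly three affine points over `𝔽₃`;
hence `a₃(E₁) = 0`. Both level-lowering congruences then force the prime `n ≥ 11` to divide
`12`, which is absurd.
-/

open Finset in
/-- The trace of Frobenius at `3` of the Frey curve
`E₁ : Y² + XY = X³ + cX² + dX` (with `c = (a-1)/4`, `d = bⁿ/64`), computed as
`a₃(E₁) = 3 + 1 - #E₁(𝔽₃) = 3 - #{affine points of E₁ over 𝔽₃}`. -/
def freyTraceAt3 (c d : ℤ) : ℤ :=
  3 - ((univ.filter fun p : ZMod 3 × ZMod 3 =>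
    p.2 ^ 2 + p.1 * p.2 =
      p.1 ^ 3 + (c : ZMod 3) * p.1 ^ 2 + (d : ZMod 3) * p.1).card : ℤ)

theorem freyTraceAt3_eq_zero {c d : ℤ} (hc : (c : ZMod 3) = 2) (hd : (d : ZMod 3) = 1) :
    freyTraceAt3 c d = 0 := by
  unfold freyTraceAt3
  simp only [hc, hd]
  decide

theorem intCast_zmod_three_eq_two_of_four_mul_eq {a c : ℤ} (ha : (3 : ℤ) ∣ a)
    (hc : 4 * c = a - 1) : (c : ZMod 3) = 2 := by
  have hc3 := congrArg (Int.cast : ℤ → ZMod 3) hc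
  push_cast at hc3
  rw [(ZMod.intCast_zmod_eq_zero_iff_dvd a 3).2 ha, show (4 : ZMod 3) = 1 by decide,
    one_mul] at hc3
  rw [hc3]
  decide

theorem intCast_zmod_three_eq_one_of_sixtyfour_mul_eq {a b d : ℤ} {k n : ℕ}
    (ha : (3 : ℤ) ∣ a) (heq : a ^ 2 + 7 ^ (2 * k + 1) = b ^ n) (hd : 64 * d = b ^ n) :
    (d : ZMod 3) = 1 := by
  have hd3 := congrArg (Int.cast : ℤ → ZMod 3) (hd.trans heq.symm)
  push_cast at hd3
  rwa [(ZMod.intCast_zmod_eq_zero_iff_dvd a 3).2 ha, show (64 : ZMod 3) = 1 by decide,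
    show (7 : ZMod 3) = 1 by decide, one_mul, one_pow, zero_pow two_ne_zero, zero_add] at hd3

theorem Nat.Prime.not_dvd_twelve {p : ℕ} (hp : p.Prime) (h11 : 11 ≤ p) : ¬ p ∣ 12 := by
  intro hdvd
  have hle : p ≤ 12 := Nat.le_of_dvd (by norm_num) hdvd
  interval_cases p <;> simp_all (config := { decide := true })

theorem stmt_17_general (a b c d : ℤ) (k n : ℕ) (hn : n.Prime) (h11 : 11 ≤ n)
    (heq : a ^ 2 + 7 ^ (2 * k + 1) = b ^ n)
    (hc : 4 * c = a - 1) (hd : 64 * d = b ^ n)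
    (hlevel14 : (n : ℤ) ∣ (freyTraceAt3 c d - (-2)) ∨
      (n : ℤ) ∣ ((3 + 1) ^ 2 - (-2 : ℤ) ^ 2)) :
    ¬ (3 : ℤ) ∣ a := by
  intro h3
  have htrace : freyTraceAt3 c d = 0 :=
    freyTraceAt3_eq_zero (intCast_zmod_three_eq_two_of_four_mul_eq h3 hc)
      (intCast_zmod_three_eq_one_of_sixtyfour_mul_eq h3 heq hd)
  have h12 : (n : ℤ) ∣ 12 := by
    rw [htrace] at hlevel14
    rcases hlevel14 with h2 | h12
    · exact h2.trans (by norm_num)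
    · simpa using h12
  exact hn.not_dvd_twelve h11 (by exact_mod_cast h12)

/-- If `(a,b)` is a nontrivial primitive solution of `x² + 7^(2k+1) = yⁿ` with `n ≥ 11` an
odd prime, `b` even and not a power of `2`, `a ≡ 1 (mod 4)`, and the mod-`n` Galois
representation of the Frey curve `E₁ : Y² + XY = X³ + ((a-1)/4)X² + (bⁿ/64)X` arises from
the unique rational newform `f₁` of level `14` (which has `a₃(f₁) = -2`; by the standard
level-lowering congruences this means `a₃(E₁) ≡ -2 (mod n)` or
`(3+1)² ≡ a₃(f₁)² (mod n)`), then `3 ∤ a`. -/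
theorem stmt_17 (a b c d : ℤ) (k n : ℕ) (hn : n.Prime) (hodd : Odd n) (h11 : 11 ≤ n)
    (hcop : IsCoprime a b) (ha0 : a ≠ 0) (hbe : Even b)
    (hbpow : ∀ m : ℕ, b.natAbs ≠ 2 ^ m)
    (ha1 : a % 4 = 1)
    (heq : a ^ 2 + 7 ^ (2 * k + 1) = b ^ n)
    (hc : 4 * c = a - 1) (hd : 64 * d = b ^ n)
    (hlevel14 : (n : ℤ) ∣ (freyTraceAt3 c d - (-2)) ∨
      (n : ℤ) ∣ ((3 + 1) ^ 2 - (-2 : ℤ) ^ 2)) :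
    ¬ (3 : ℤ) ∣ a :=
  stmt_17_general a b c d k n hn h11 heq hc hd hlevel14
end
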